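/- Let T > 0, ℓ > 0, s > 0, f_c > 0, ε > 0, N₀ > 0, B > 0, R_max ≥ 1, and suppose d(R) = T/ℓ − 1/s − (e^{εR} − e^{ε})/f_c > 0 for all R ∈ [1, R_max]. Then the function φ(R) = G(1/(d(R)R))/f_c + f′(1/(d(R)R))/(R²·ε e^{εR}) is strictly decreasing on [1, R_max]. Consequently (Corollary 5), if two sensors share the parameters T, ℓ, s, f_c, ε, N₀, B and their stationary compression ratios R₁, R₂ ∈ [1, R_max] satisfy φ(R_i) = q_i·g_i (i.e., z(R_i) = 0 for sensor i with per-cycle compression energy q_i > 0 and channel gain g_i > 0), then: (1) if q₁ = q₂ and g₁ ≥ g₂, then R₁ ≤ R₂; (2) if g₁ = g₂ and q₁ ≥ q₂, then R₁ ≤ R₂. -/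

import Mathlib

/-- f(x) = N₀ (2^{x/B} − 1). -/
noncomputable def fTx (N₀ B x : ℝ) : ℝ := N₀ * ((2 : ℝ) ^ (x / B) - 1)

/-- f′(x) = (N₀ ln 2 / B)·2^{x/B}. -/
noncomputable def fTx' (N₀ B x : ℝ) : ℝ := N₀ * Real.log 2 / B * (2 : ℝ) ^ (x / B)

/-- G(x) = f(x) − x f′(x). -/
noncomputable def GG (N₀ B x : ℝ) : ℝ := fTx N₀ B x - x * fTx' N₀ B x

/-- d(R) = T/ℓ − 1/s − (e^{εR} − e^{ε})/f_c. -/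
noncomputable def dd (T ℓ s fc ε R : ℝ) : ℝ :=
  T / ℓ - 1 / s - (Real.exp (ε * R) - Real.exp ε) / fc

/-- φ(R) = G(1/(d(R)R))/f_c + f′(1/(d(R)R))/(R²·ε e^{εR}); the stationarity
condition z(R) = 0 of P1-B is equivalent to φ(R) = q·g. -/
noncomputable def phiP1B (T ℓ s fc ε N₀ B R : ℝ) : ℝ :=
  GG N₀ B (1 / (dd T ℓ s fc ε R * R)) / fc
    + fTx' N₀ B (1 / (dd T ℓ s fc ε R * R)) / (R ^ 2 * (ε * Real.exp (ε * R)))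

/-!
Write `x = 1/p` with `p(R) = d(R)·R` and `h(R) = R²·ε e^{εR}`, so that
`φ = G(x)/f_c + f'(x)/h`. Since `G' = -x f''`, the chain rule gives
`φ' = f''(x)·x'·(1/h - x/f_c) - f'(x)·h'/h²`, and
`x'·(1/h - x/f_c) = -p'·(p f_c - h)/(p³ h f_c)`. Because `d' = -ε e^{εR}/f_c`, we have
`h = -f_c R² d'`, hence `p f_c - h = f_c R p'`: the first term of `φ'` is `-f''(x)·p'²·(…) ≤ 0`,
while the second is negative because `f' > 0` and `h` is increasing.
-/

open Real

lemma hasDerivAt_fTx' (N₀ B x : ℝ) :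
    HasDerivAt (fTx' N₀ B) (log 2 / B * fTx' N₀ B x) x := by
  refine ((((hasDerivAt_id x).div_const B).const_rpow two_pos).const_mul
    (N₀ * log 2 / B)).congr_deriv ?_
  simp only [fTx', id]
  ring

lemma hasDerivAt_fTx (N₀ B x : ℝ) : HasDerivAt (fTx N₀ B) (fTx' N₀ B x) x := by
  refine ((((hasDerivAt_id x).div_const B).const_rpow two_pos).sub_const 1).const_mul
    N₀ |>.congr_deriv ?_
  simp only [fTx', id]
  ring

lemma hasDerivAt_GG (N₀ B x : ℝ) :
    HasDerivAt (GG N₀ B) (-(x * (log 2 / B * fTx' N₀ B x))) x := by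
  refine (hasDerivAt_fTx N₀ B x).sub ((hasDerivAt_id x).mul (hasDerivAt_fTx' N₀ B x))
    |>.congr_deriv ?_
  simp only [id]
  ring

lemma fTx'_pos {N₀ B : ℝ} (hN₀ : 0 < N₀) (hB : 0 < B) (x : ℝ) : 0 < fTx' N₀ B x := by
  unfold fTx'
  have := log_pos one_lt_two
  positivity

lemma hasDerivAt_GG_inv_div_add_fTx'_inv_div (N₀ B c : ℝ) {p h : ℝ → ℝ} {p' h' R : ℝ}
    (hp : HasDerivAt p p' R) (hh : HasDerivAt h h' R) (hc : c ≠ 0) (hp0 : p R ≠ 0)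
    (hh0 : h R ≠ 0) :
    HasDerivAt (fun r ↦ GG N₀ B (1 / p r) / c + fTx' N₀ B (1 / p r) / h r)
      (-(log 2 / B * fTx' N₀ B (1 / p R) * (p' * (p R * c - h R)) / (p R ^ 3 * h R * c))
        - fTx' N₀ B (1 / p R) * h' / h R ^ 2) R := by
  have hx : HasDerivAt (fun r ↦ 1 / p r) (-p' / p R ^ 2) R := by
    refine (hasDerivAt_const R 1).div hp hp0 |>.congr_deriv ?_
    ring
  have hG := ((hasDerivAt_GG N₀ B _).comp R hx).div_const c
  have hF := ((hasDerivAt_fTx' N₀ B _).comp R hx).div hh hh0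
  refine hG.add hF |>.congr_deriv ?_
  simp only [Function.comp_apply]
  field_simp
  ring

lemma hasDerivAt_dd (T ℓ s fc ε R : ℝ) :
    HasDerivAt (dd T ℓ s fc ε) (-(ε * exp (ε * R)) / fc) R := by
  refine (((hasDerivAt_const_mul ε).exp.sub_const (exp ε)).div_const fc).const_sub
    (T / ℓ - 1 / s) |>.congr_deriv ?_
  ring

lemma phiP1B_hasDerivAt_neg {T ℓ s fc ε N₀ B R : ℝ} (hfc : 0 < fc) (hε : 0 < ε)
    (hN₀ : 0 < N₀) (hB : 0 < B) (hR : 0 < R) (hdR : 0 < dd T ℓ s fc ε R) :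
    ∃ D, HasDerivAt (phiP1B T ℓ s fc ε N₀ B) D R ∧ D < 0 := by
  set d := dd T ℓ s fc ε R
  set e := exp (ε * R)
  have he : 0 < e := exp_pos _
  set p' := d - ε * e / fc * R
  have hp : HasDerivAt (fun r ↦ dd T ℓ s fc ε r * r) p' R := by
    refine (hasDerivAt_dd T ℓ s fc ε R).mul (hasDerivAt_id R) |>.congr_deriv ?_
    simp only [id, p']
    ring
  have hh : HasDerivAt (fun r ↦ r ^ 2 * (ε * exp (ε * r))) (ε * e * R * (2 + ε * R)) R := by
    refine (hasDerivAt_pow 2 R).mul ((hasDerivAt_const_mul ε).exp.const_mul ε)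
      |>.congr_deriv ?_
    push_cast
    ring
  refine ⟨_, hasDerivAt_GG_inv_div_add_fTx'_inv_div N₀ B fc hp hh hfc.ne'
    (mul_pos hdR hR).ne' (by positivity), ?_⟩
  have hsign : p' * (d * R * fc - R ^ 2 * (ε * e)) = fc * R * p' ^ 2 := by
    simp only [p']
    field_simp
  rw [hsign]
  have := log_pos one_lt_two
  have hf' := fTx'_pos hN₀ hB (1 / (d * R))
  have hfirst : 0 ≤ log 2 / B * fTx' N₀ B (1 / (d * R)) * (fc * R * p' ^ 2)
      / ((d * R) ^ 3 * (R ^ 2 * (ε * e)) * fc) := by positivity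
  have hsecond : 0 < fTx' N₀ B (1 / (d * R)) * (ε * e * R * (2 + ε * R))
      / (R ^ 2 * (ε * e)) ^ 2 := by positivity
  linarith

lemma strictAntiOn_of_forall_hasDerivAt_neg {D : Set ℝ} (hD : Convex ℝ D) {f : ℝ → ℝ}
    (hf : ∀ x ∈ D, ∃ f', HasDerivAt f f' x ∧ f' < 0) : StrictAntiOn f D := by
  refine strictAntiOn_of_deriv_neg hD (fun x hx ↦ ?_) (fun x hx ↦ ?_)
  · obtain ⟨_, hderiv, _⟩ := hf x hx
    exact hderiv.continuousAt.continuousWithinAt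
  · obtain ⟨_, hderiv, hneg⟩ := hf x (interior_subset hx)
    rwa [hderiv.deriv]

lemma StrictAntiOn.le_of_apply_eq_of_le {s : Set ℝ} {φ : ℝ → ℝ} (hφ : StrictAntiOn φ s)
    {R₁ R₂ a₁ a₂ : ℝ} (h₁ : R₁ ∈ s) (h₂ : R₂ ∈ s) (ha : a₂ ≤ a₁) (e₁ : φ R₁ = a₁)
    (e₂ : φ R₂ = a₂) : R₁ ≤ R₂ :=
  (hφ.le_iff_ge h₂ h₁).mp (by rwa [e₁, e₂])

theorem phi_strictly_decreasing_and_compression_ordering_general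
    (T ℓ s fc ε N₀ B Rmax : ℝ)
    (hfc : 0 < fc) (hε : 0 < ε)
    (hN₀ : 0 < N₀) (hB : 0 < B)
    (hd : ∀ R ∈ Set.Icc (1 : ℝ) Rmax, 0 < dd T ℓ s fc ε R) :
    StrictAntiOn (phiP1B T ℓ s fc ε N₀ B) (Set.Icc 1 Rmax) ∧
    (∀ q g₁ g₂ R₁ R₂ : ℝ, 0 < q → 0 < g₂ → g₂ ≤ g₁ →
      R₁ ∈ Set.Icc (1 : ℝ) Rmax → R₂ ∈ Set.Icc (1 : ℝ) Rmax →
      phiP1B T ℓ s fc ε N₀ B R₁ = q * g₁ →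
      phiP1B T ℓ s fc ε N₀ B R₂ = q * g₂ → R₁ ≤ R₂) ∧
    (∀ q₁ q₂ g R₁ R₂ : ℝ, 0 < g → 0 < q₂ → q₂ ≤ q₁ →
      R₁ ∈ Set.Icc (1 : ℝ) Rmax → R₂ ∈ Set.Icc (1 : ℝ) Rmax →
      phiP1B T ℓ s fc ε N₀ B R₁ = q₁ * g →
      phiP1B T ℓ s fc ε N₀ B R₂ = q₂ * g → R₁ ≤ R₂) := by
  have hanti : StrictAntiOn (phiP1B T ℓ s fc ε N₀ B) (Set.Icc 1 Rmax) :=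
    strictAntiOn_of_forall_hasDerivAt_neg (convex_Icc 1 Rmax) fun R hR ↦
      phiP1B_hasDerivAt_neg hfc hε hN₀ hB (one_pos.trans_le hR.1) (hd R hR)
  refine ⟨hanti, ?_, ?_⟩
  · intro q g₁ g₂ R₁ R₂ hq _ hg h₁ h₂ e₁ e₂
    exact hanti.le_of_apply_eq_of_le h₁ h₂ (mul_le_mul_of_nonneg_left hg hq.le) e₁ e₂
  · intro q₁ q₂ g R₁ R₂ hg _ hq h₁ h₂ e₁ e₂
    exact hanti.le_of_apply_eq_of_le h₁ h₂ (mul_le_mul_of_nonneg_right hq hg.le) e₁ e₂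

/-- Corollary 5: φ is strictly decreasing on [1, R_max];
consequently, among two sensors with stationary ratios φ(R_i) = q_i·g_i,
the one with larger channel gain (equal compression power), or with larger
compression power (equal channel gain), has the smaller compression ratio. -/
theorem phi_strictly_decreasing_and_compression_ordering
    (T ℓ s fc ε N₀ B Rmax : ℝ)
    (hT : 0 < T) (hℓ : 0 < ℓ) (hs : 0 < s) (hfc : 0 < fc) (hε : 0 < ε)
    (hN₀ : 0 < N₀) (hB : 0 < B) (hRmax : 1 ≤ Rmax)
    (hd : ∀ R ∈ Set.Icc (1 : ℝ) Rmax, 0 < dd T ℓ s fc ε R) :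
    StrictAntiOn (phiP1B T ℓ s fc ε N₀ B) (Set.Icc 1 Rmax) ∧
    (∀ q g₁ g₂ R₁ R₂ : ℝ, 0 < q → 0 < g₂ → g₂ ≤ g₁ →
      R₁ ∈ Set.Icc (1 : ℝ) Rmax → R₂ ∈ Set.Icc (1 : ℝ) Rmax →
      phiP1B T ℓ s fc ε N₀ B R₁ = q * g₁ →
      phiP1B T ℓ s fc ε N₀ B R₂ = q * g₂ → R₁ ≤ R₂) ∧
    (∀ q₁ q₂ g R₁ R₂ : ℝ, 0 < g → 0 < q₂ → q₂ ≤ q₁ →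
      R₁ ∈ Set.Icc (1 : ℝ) Rmax → R₂ ∈ Set.Icc (1 : ℝ) Rmax →
      phiP1B T ℓ s fc ε N₀ B R₁ = q₁ * g →
      phiP1B T ℓ s fc ε N₀ B R₂ = q₂ * g → R₁ ≤ R₂) :=
  phi_strictly_decreasing_and_compression_ordering_general T ℓ s fc ε N₀ B Rmax hfc hε hN₀ hB hd
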